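/- arXiv:2402.08932 — 4 statements merged into one kernel-verified Lean document; each statement's English description precedes it below -/
import Mathlib

section
/- In a weighted complete bipartite graph, if l is a feasible labeling (i.e., l(u) + l(v) ≥ w(u,v) for every edge {u,v}) and ψ is a perfect matching contained in the equality subgraph G_l (the subgraph of edges with l(u) + l(v) = w(u,v)), then ψ is a maximum-weight perfect matching of the graph. -/
/-- Kuhn–Munkres theorem: in a weighted complete bipartite graph, if `l` is a feasible
labeling and `ψ` is a perfect matching contained in the equality subgraph `G_l`,
then `ψ` is a maximum-weight perfect matching. -/
theorem kuhn_munkres (n : ℕ) (w : Fin n → Fin n → ℝ) (lx ly : Fin n → ℝ)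
    (hl : ∀ u v, w u v ≤ lx u + ly v)
    (ψ : Equiv.Perm (Fin n)) (hψ : ∀ u, lx u + ly (ψ u) = w u (ψ u)) :
    ∀ σ : Equiv.Perm (Fin n), ∑ u, w u (σ u) ≤ ∑ u, w u (ψ u) := by
  intro σ
  calc ∑ u, w u (σ u) ≤ ∑ u, (lx u + ly (σ u)) :=
        Finset.sum_le_sum fun u _ => hl u (σ u)
    _ = ∑ u, lx u + ∑ u, ly (σ u) := Finset.sum_add_distrib
    _ = ∑ u, lx u + ∑ u, ly (ψ u) := by
        rw [Equiv.sum_comp σ ly, Equiv.sum_comp ψ ly]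
    _ = ∑ u, (lx u + ly (ψ u)) := Finset.sum_add_distrib.symm
    _ = ∑ u, w u (ψ u) := Finset.sum_congr rfl fun u _ => hψ u
end

section
/- Let Φ be a feasible partition of a complete K-partite weighted graph into C cliques, with neighborhood N(Φ) of size n = K·C(C−1)/2. Then the average of w(Φ') − w(G)/C over all neighbors Φ' ∈ N(Φ) equals (1 − 2C/n)·(w(Φ) − w(G)/C). -/
open Finset

namespace NWaux

variable {K C : ℕ}

/-- weight inside one clique with assignment `h : part → clique vertex label` -/
def Wc (w : Fin K × Fin C → Fin K × Fin C → ℝ) (h : Fin K → Fin C) : ℝ :=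
  ∑ k : Fin K, ∑ k' : Fin K, if k ≠ k' then w (k, h k) (k', h k') else 0

def Wt (w : Fin K × Fin C → Fin K × Fin C → ℝ) (g : Fin C → Fin K → Fin C) : ℝ :=
  ∑ c : Fin C, Wc w (g c)

def WGt (w : Fin K × Fin C → Fin K × Fin C → ℝ) : ℝ :=
  ∑ u : Fin K × Fin C, ∑ v : Fin K × Fin C, if u.1 ≠ v.1 then w u v else 0

def Sw (f : Fin C → Fin K → Fin C) (k : Fin K) (c₁ c₂ : Fin C) :
    Fin C → Fin K → Fin C := fun c k' =>
  if k' = k then (if c = c₁ then f c₂ k else if c = c₂ then f c₁ k else f c k)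
  else f c k'

/-- change of clique `c₁`'s weight when its `k`-vertex is replaced by the one with label `f c₂ k` -/
def D (w : Fin K × Fin C → Fin K × Fin C → ℝ) (f : Fin C → Fin K → Fin C)
    (k : Fin K) (c₁ c₂ : Fin C) : ℝ :=
  ∑ k' : Fin K, if k ≠ k' then
    w (k, f c₂ k) (k', f c₁ k') - w (k, f c₁ k) (k', f c₁ k') else 0

lemma split2 (k : Fin K) (t : Fin K → Fin K → ℝ) :
    ∑ a : Fin K, ∑ b : Fin K, t a b =
      t k k + ∑ b ∈ {k}ᶜ, t k b +
        (∑ a ∈ {k}ᶜ, t a k + ∑ a ∈ {k}ᶜ, ∑ b ∈ {k}ᶜ, t a b) := by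
  rw [Fintype.sum_eq_add_sum_compl k (fun a => ∑ b, t a b),
    Fintype.sum_eq_add_sum_compl k (t k),
    Finset.sum_congr rfl (fun a _ => Fintype.sum_eq_add_sum_compl k (t a)),
    Finset.sum_add_distrib]

lemma Wc_update (w : Fin K × Fin C → Fin K × Fin C → ℝ)
    (hsymm : ∀ u v, w u v = w v u) (k : Fin K) (h : Fin K → Fin C) (d : Fin C) :
    Wc w (fun k' => if k' = k then d else h k') =
      Wc w h + 2 * ∑ k' : Fin K,
        (if k ≠ k' then w (k, d) (k', h k') - w (k, h k) (k', h k') else 0) := by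
  have e1 : Wc w (fun k' => if k' = k then d else h k') =
      0 + ∑ b ∈ {k}ᶜ, w (k, d) (b, h b) +
        (∑ a ∈ {k}ᶜ, w (a, h a) (k, d) +
          ∑ a ∈ {k}ᶜ, ∑ b ∈ {k}ᶜ, (if a ≠ b then w (a, h a) (b, h b) else 0)) := by
    rw [Wc, split2 k]
    congr 1
    · congr 1
      · simp
      · refine Finset.sum_congr rfl fun b hb => ?_
        rw [Finset.mem_compl, Finset.mem_singleton] at hb
        rw [if_pos (Ne.symm hb)]
        simp [hb]
    · congr 1
      · refine Finset.sum_congr rfl fun a ha => ?_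
        rw [Finset.mem_compl, Finset.mem_singleton] at ha
        rw [if_pos ha]
        simp [ha]
      · refine Finset.sum_congr rfl fun a ha => Finset.sum_congr rfl fun b hb => ?_
        rw [Finset.mem_compl, Finset.mem_singleton] at ha
        rw [Finset.mem_compl, Finset.mem_singleton] at hb
        by_cases hab : a ≠ b
        · rw [if_pos hab, if_pos hab]
          simp [ha, hb]
        · rw [if_neg hab, if_neg hab]
  have e2 : Wc w h =
      0 + ∑ b ∈ {k}ᶜ, w (k, h k) (b, h b) +
        (∑ a ∈ {k}ᶜ, w (a, h a) (k, h k) +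
          ∑ a ∈ {k}ᶜ, ∑ b ∈ {k}ᶜ, (if a ≠ b then w (a, h a) (b, h b) else 0)) := by
    rw [Wc, split2 k]
    congr 1
    · congr 1
      · simp
      · refine Finset.sum_congr rfl fun b hb => ?_
        rw [Finset.mem_compl, Finset.mem_singleton] at hb
        rw [if_pos (Ne.symm hb)]
    · congr 1
      refine Finset.sum_congr rfl fun a ha => ?_
      rw [Finset.mem_compl, Finset.mem_singleton] at ha
      rw [if_pos ha]
  have e3 : ∑ k' : Fin K,
      (if k ≠ k' then w (k, d) (k', h k') - w (k, h k) (k', h k') else 0) =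
      ∑ b ∈ {k}ᶜ, (w (k, d) (b, h b) - w (k, h k) (b, h b)) := by
    rw [Fintype.sum_eq_add_sum_compl k, if_neg (by simp), zero_add]
    refine Finset.sum_congr rfl fun b hb => ?_
    rw [Finset.mem_compl, Finset.mem_singleton] at hb
    rw [if_pos (Ne.symm hb)]
  have e4 : ∑ a ∈ {k}ᶜ, w (a, h a) (k, d) = ∑ b ∈ {k}ᶜ, w (k, d) (b, h b) :=
    Finset.sum_congr rfl fun a _ => hsymm _ _
  have e5 : ∑ a ∈ {k}ᶜ, w (a, h a) (k, h k) = ∑ b ∈ {k}ᶜ, w (k, h k) (b, h b) :=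
    Finset.sum_congr rfl fun a _ => hsymm _ _
  rw [e1, e2, e3, Finset.sum_sub_distrib, e4, e5]
  ring

lemma swap_eq (w : Fin K × Fin C → Fin K × Fin C → ℝ)
    (hsymm : ∀ u v, w u v = w v u) (f : Fin C → Fin K → Fin C)
    (k : Fin K) (c₁ c₂ : Fin C) (h12 : c₁ ≠ c₂) :
    Wt w (Sw f k c₁ c₂) = Wt w f + 2 * D w f k c₁ c₂ + 2 * D w f k c₂ c₁ := by
  have hc1 : Sw f k c₁ c₂ c₁ = fun k' => if k' = k then f c₂ k else f c₁ k' := by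
    funext k'; simp [Sw]
  have hc2 : Sw f k c₁ c₂ c₂ = fun k' => if k' = k then f c₁ k else f c₂ k' := by
    funext k'; simp [Sw, h12.symm]
  have hco : ∀ c, c ≠ c₁ → c ≠ c₂ → Sw f k c₁ c₂ c = f c := by
    intro c h1 h2
    funext k'
    by_cases hk : k' = k
    · subst hk; simp [Sw, h1, h2]
    · simp [Sw, hk]
  have key : ∑ c : Fin C, (Wc w (Sw f k c₁ c₂ c) - Wc w (f c)) =
      (Wc w (Sw f k c₁ c₂ c₁) - Wc w (f c₁)) +
        (Wc w (Sw f k c₁ c₂ c₂) - Wc w (f c₂)) :=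
    Finset.sum_eq_add_of_mem c₁ c₂ (Finset.mem_univ _) (Finset.mem_univ _) h12
      (fun c _ hc => by rw [hco c hc.1 hc.2, sub_self])
  have hdiff : Wt w (Sw f k c₁ c₂) - Wt w f =
      ∑ c : Fin C, (Wc w (Sw f k c₁ c₂ c) - Wc w (f c)) := by
    rw [Finset.sum_sub_distrib]; rfl
  have h1 := Wc_update w hsymm k (f c₁) (f c₂ k)
  have h2 := Wc_update w hsymm k (f c₂) (f c₁ k)
  rw [key, hc1, hc2, h1, h2] at hdiff
  have hD1 : D w f k c₁ c₂ = ∑ k' : Fin K,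
      (if k ≠ k' then w (k, f c₂ k) (k', f c₁ k') - w (k, f c₁ k) (k', f c₁ k') else 0) := rfl
  have hD2 : D w f k c₂ c₁ = ∑ k' : Fin K,
      (if k ≠ k' then w (k, f c₁ k) (k', f c₂ k') - w (k, f c₂ k) (k', f c₂ k') else 0) := rfl
  rw [← hD1, ← hD2] at hdiff
  linarith

lemma count_ite (r : ℝ) :
    ∑ c₁ : Fin C, ∑ c₂ : Fin C, (if c₁ ≠ c₂ then r else 0) =
      (C : ℝ) * ((C : ℝ) - 1) * r := by
  have h1 : ∀ c₁ : Fin C, ∑ c₂ : Fin C, (if c₁ ≠ c₂ then r else 0) =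
      (C : ℝ) * r - r := by
    intro c₁
    have : ∀ c₂ : Fin C, (if c₁ ≠ c₂ then r else 0) =
        r - (if c₁ = c₂ then r else 0) := by
      intro c₂; by_cases h : c₁ = c₂ <;> simp [h]
    rw [Finset.sum_congr rfl (fun c₂ _ => this c₂), Finset.sum_sub_distrib,
      Finset.sum_const, Finset.sum_ite_eq]
    simp [mul_comm]
  rw [Finset.sum_congr rfl (fun c₁ _ => h1 c₁)]
  simp
  ring

lemma ite_sum {α : Type*} {p : Prop} [Decidable p] (s : Finset α) (F : α → ℝ) :
    (if p then ∑ x ∈ s, F x else 0) = ∑ x ∈ s, (if p then F x else 0) := by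
  split_ifs with h
  · rfl
  · simp

/-- key identity: the sum of `D` over all `k` and ordered pairs of distinct cliques -/
lemma sum_D (w : Fin K × Fin C → Fin K × Fin C → ℝ) (f : Fin C → Fin K → Fin C)
    (hf : ∀ k : Fin K, Function.Bijective (fun c => f c k)) :
    ∑ k : Fin K, ∑ c₁ : Fin C, ∑ c₂ : Fin C, (if c₁ ≠ c₂ then D w f k c₁ c₂ else 0) =
      WGt w - (C : ℝ) * Wt w f := by
  -- first: for fixed k, c₁ the inner sum over c₂
  have step1 : ∀ (k : Fin K) (c₁ : Fin C),
      ∑ c₂ : Fin C, (if c₁ ≠ c₂ then D w f k c₁ c₂ else 0) =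
        ∑ k' : Fin K, (if k ≠ k' then
          (∑ d : Fin C, w (k, d) (k', f c₁ k')) -
            (C : ℝ) * w (k, f c₁ k) (k', f c₁ k') else 0) := by
    intro k c₁
    have hDzero : D w f k c₁ c₁ = 0 := by
      simp [D]
    have h2 : ∑ c₂ : Fin C, (if c₁ ≠ c₂ then D w f k c₁ c₂ else 0) =
        (∑ c₂ : Fin C, D w f k c₁ c₂) - D w f k c₁ c₁ := by
      have : ∀ c₂ : Fin C, (if c₁ ≠ c₂ then D w f k c₁ c₂ else 0) =
          D w f k c₁ c₂ - (if c₁ = c₂ then D w f k c₁ c₂ else 0) := by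
        intro c₂; by_cases h : c₁ = c₂ <;> simp [h]
      rw [Finset.sum_congr rfl (fun c₂ _ => this c₂), Finset.sum_sub_distrib,
        Finset.sum_ite_eq]
      simp
    rw [h2, hDzero, sub_zero]
    unfold D
    rw [Finset.sum_comm]
    refine Finset.sum_congr rfl fun k' _ => ?_
    rw [← ite_sum]
    by_cases hkk : k ≠ k'
    · rw [if_pos hkk, if_pos hkk, Finset.sum_sub_distrib, Finset.sum_const]
      have := (hf k).sum_comp (fun d => w (k, d) (k', f c₁ k'))
      rw [this]
      simp [mul_comm]
    · rw [if_neg hkk, if_neg hkk]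
  rw [Finset.sum_congr rfl (fun k _ => Finset.sum_congr rfl (fun c₁ _ => step1 k c₁))]
  -- split the subtraction
  have split : ∀ (k : Fin K) (c₁ : Fin C) (k' : Fin K),
      (if k ≠ k' then (∑ d : Fin C, w (k, d) (k', f c₁ k')) -
          (C : ℝ) * w (k, f c₁ k) (k', f c₁ k') else 0) =
        (if k ≠ k' then (∑ d : Fin C, w (k, d) (k', f c₁ k')) else 0) -
          (C : ℝ) * (if k ≠ k' then w (k, f c₁ k) (k', f c₁ k') else 0) := by
    intro k c₁ k'; by_cases h : k ≠ k' <;> simp [h]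
  simp only [split, Finset.sum_sub_distrib, ← Finset.mul_sum]
  have hW : ∑ k : Fin K, ∑ c₁ : Fin C, ∑ k' : Fin K,
      (if k ≠ k' then w (k, f c₁ k) (k', f c₁ k') else 0) = Wt w f := by
    rw [Finset.sum_comm]; rfl
  have hWG : ∑ k : Fin K, ∑ c₁ : Fin C, ∑ k' : Fin K,
      (if k ≠ k' then (∑ d : Fin C, w (k, d) (k', f c₁ k')) else 0) = WGt w := by
    have h1 : ∀ k : Fin K, ∑ c₁ : Fin C, ∑ k' : Fin K,
        (if k ≠ k' then (∑ d : Fin C, w (k, d) (k', f c₁ k')) else 0) =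
        ∑ k' : Fin K, ∑ c₁ : Fin C,
          (if k ≠ k' then (∑ d : Fin C, w (k, d) (k', f c₁ k')) else 0) := fun k =>
      Finset.sum_comm
    rw [Finset.sum_congr rfl (fun k _ => h1 k)]
    have h2 : ∀ (k k' : Fin K), ∑ c₁ : Fin C,
        (if k ≠ k' then (∑ d : Fin C, w (k, d) (k', f c₁ k')) else 0) =
        ∑ c' : Fin C, (if k ≠ k' then (∑ d : Fin C, w (k, d) (k', c')) else 0) := by
      intro k k'
      exact (hf k').sum_comp (fun c' => if k ≠ k' then (∑ d : Fin C, w (k, d) (k', c')) else 0)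
    rw [Finset.sum_congr rfl (fun k _ => Finset.sum_congr rfl (fun k' _ => h2 k k'))]
    -- now show it equals WGt
    have hWGt : WGt w = ∑ k : Fin K, ∑ d : Fin C, ∑ k' : Fin K, ∑ c' : Fin C,
        (if k ≠ k' then w (k, d) (k', c') else 0) := by
      rw [WGt, Fintype.sum_prod_type]
      refine Finset.sum_congr rfl fun k _ => Finset.sum_congr rfl fun d _ => ?_
      rw [Fintype.sum_prod_type]
    rw [hWGt]
    have h3 : ∀ (k k' : Fin K), ∑ c' : Fin C,
        (if k ≠ k' then (∑ d : Fin C, w (k, d) (k', c')) else 0) =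
        ∑ c' : Fin C, ∑ d : Fin C, (if k ≠ k' then w (k, d) (k', c') else 0) := by
      intro k k'
      refine Finset.sum_congr rfl fun c' _ => ?_
      rw [ite_sum]
    rw [Finset.sum_congr rfl (fun k _ => Finset.sum_congr rfl (fun k' _ => h3 k k'))]
    refine Finset.sum_congr rfl fun k _ => ?_
    calc ∑ k' : Fin K, ∑ c' : Fin C, ∑ d : Fin C,
          (if k ≠ k' then w (k, d) (k', c') else 0)
        = ∑ k' : Fin K, ∑ d : Fin C, ∑ c' : Fin C,
          (if k ≠ k' then w (k, d) (k', c') else 0) :=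
        Finset.sum_congr rfl fun k' _ => Finset.sum_comm
      _ = ∑ d : Fin C, ∑ k' : Fin K, ∑ c' : Fin C,
          (if k ≠ k' then w (k, d) (k', c') else 0) := Finset.sum_comm
  rw [hW, hWG]

theorem main (K C : ℕ) (hK : 1 ≤ K) (hC : 2 ≤ C)
    (w : Fin K × Fin C → Fin K × Fin C → ℝ) (hsymm : ∀ u v, w u v = w v u)
    (f : Fin C → Fin K → Fin C)
    (hf : ∀ k : Fin K, Function.Bijective (fun c => f c k)) :
    (1 / ((K : ℝ) * ((C : ℝ) * ((C : ℝ) - 1)) / 2)) *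
      ((1 / 2) * ∑ k : Fin K, ∑ c₁ : Fin C, ∑ c₂ : Fin C,
        (if c₁ ≠ c₂ then (Wt w (Sw f k c₁ c₂) - WGt w / (C : ℝ)) else 0))
    = (1 - 2 * (C : ℝ) / ((K : ℝ) * ((C : ℝ) * ((C : ℝ) - 1)) / 2)) *
        (Wt w f - WGt w / (C : ℝ)) := by
  have hCR : (2 : ℝ) ≤ (C : ℝ) := by exact_mod_cast hC
  have hKR : (1 : ℝ) ≤ (K : ℝ) := by exact_mod_cast hK
  have hC0 : (C : ℝ) ≠ 0 := by linarith
  have hK0 : (K : ℝ) ≠ 0 := by linarith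
  have hC1 : (C : ℝ) - 1 ≠ 0 := by linarith
  have hn0 : (K : ℝ) * ((C : ℝ) * ((C : ℝ) - 1)) / 2 ≠ 0 := by
    have h1 : (0 : ℝ) < (C : ℝ) * ((C : ℝ) - 1) := by nlinarith
    have h2 : (0 : ℝ) < (K : ℝ) * ((C : ℝ) * ((C : ℝ) - 1)) :=
      mul_pos (by linarith) h1
    positivity
  have hsummand : ∀ (k : Fin K) (c₁ c₂ : Fin C),
      (if c₁ ≠ c₂ then (Wt w (Sw f k c₁ c₂) - WGt w / (C : ℝ)) else 0) =
        (if c₁ ≠ c₂ then (Wt w f - WGt w / (C : ℝ)) else 0) +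
          2 * (if c₁ ≠ c₂ then D w f k c₁ c₂ else 0) +
          2 * (if c₁ ≠ c₂ then D w f k c₂ c₁ else 0) := by
    intro k c₁ c₂
    by_cases h : c₁ ≠ c₂
    · rw [if_pos h, if_pos h, if_pos h, if_pos h, swap_eq w hsymm f k c₁ c₂ h]
      ring
    · simp [h]
  have hrev : ∀ k : Fin K, ∑ c₁ : Fin C, ∑ c₂ : Fin C,
      (if c₁ ≠ c₂ then D w f k c₂ c₁ else 0) =
      ∑ c₁ : Fin C, ∑ c₂ : Fin C, (if c₁ ≠ c₂ then D w f k c₁ c₂ else 0) := by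
    intro k
    rw [Finset.sum_comm]
    refine Finset.sum_congr rfl fun c₂ _ => Finset.sum_congr rfl fun c₁ _ => ?_
    by_cases h : c₂ = c₁
    · simp [h]
    · rw [if_pos (Ne.symm h), if_pos h]
  have h0 : ∑ k : Fin K, ∑ c₁ : Fin C, ∑ c₂ : Fin C,
      (if c₁ ≠ c₂ then (Wt w f - WGt w / (C : ℝ)) else 0) =
      (K : ℝ) * ((C : ℝ) * ((C : ℝ) - 1) * (Wt w f - WGt w / (C : ℝ))) := by
    rw [Finset.sum_congr rfl (fun k _ => count_ite _), Finset.sum_const, Finset.card_univ]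
    simp [nsmul_eq_mul]
  have hT : ∑ k : Fin K, ∑ c₁ : Fin C, ∑ c₂ : Fin C,
      (if c₁ ≠ c₂ then (Wt w (Sw f k c₁ c₂) - WGt w / (C : ℝ)) else 0) =
      (K : ℝ) * ((C : ℝ) * ((C : ℝ) - 1) * (Wt w f - WGt w / (C : ℝ))) +
        4 * (WGt w - (C : ℝ) * Wt w f) := by
    calc ∑ k : Fin K, ∑ c₁ : Fin C, ∑ c₂ : Fin C,
        (if c₁ ≠ c₂ then (Wt w (Sw f k c₁ c₂) - WGt w / (C : ℝ)) else 0)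
        = ∑ k : Fin K, ∑ c₁ : Fin C, ∑ c₂ : Fin C,
          ((if c₁ ≠ c₂ then (Wt w f - WGt w / (C : ℝ)) else 0) +
            2 * (if c₁ ≠ c₂ then D w f k c₁ c₂ else 0) +
            2 * (if c₁ ≠ c₂ then D w f k c₂ c₁ else 0)) := by
          exact Finset.sum_congr rfl fun k _ => Finset.sum_congr rfl fun c₁ _ =>
            Finset.sum_congr rfl fun c₂ _ => hsummand k c₁ c₂
      _ = (∑ k : Fin K, ∑ c₁ : Fin C, ∑ c₂ : Fin C,
            (if c₁ ≠ c₂ then (Wt w f - WGt w / (C : ℝ)) else 0)) +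
          2 * (∑ k : Fin K, ∑ c₁ : Fin C, ∑ c₂ : Fin C,
            (if c₁ ≠ c₂ then D w f k c₁ c₂ else 0)) +
          2 * (∑ k : Fin K, ∑ c₁ : Fin C, ∑ c₂ : Fin C,
            (if c₁ ≠ c₂ then D w f k c₂ c₁ else 0)) := by
          simp only [Finset.sum_add_distrib, Finset.mul_sum]
      _ = (K : ℝ) * ((C : ℝ) * ((C : ℝ) - 1) * (Wt w f - WGt w / (C : ℝ))) +
          4 * (WGt w - (C : ℝ) * Wt w f) := by
          rw [Finset.sum_congr rfl (fun k _ => hrev k), h0, sum_D w f hf]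
          ring
  rw [hT]
  field_simp
  ring

end NWaux

/-- Neighbor-weights lemma: for a feasible partition `Φ` (given by `f`) of a complete
K-partite weighted graph into `C` cliques, with neighborhood size `n = K·C(C−1)/2`, the
average of `w(Φ') − w(G)/C` over all neighbors `Φ'` equals
`(1 − 2C/n)·(w(Φ) − w(G)/C)`.  (Weights are summed over ordered pairs throughout; the
sum over ordered pairs `(c₁, c₂)` of distinct cliques counts each neighbor twice, whence
the factor `1/2`.) -/
theorem neighbor_weights (K C : ℕ) (hK : 1 ≤ K) (hC : 2 ≤ C)
    (w : Fin K × Fin C → Fin K × Fin C → ℝ) (hsymm : ∀ u v, w u v = w v u)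
    (f : Fin C → Fin K → Fin C)
    (hf : ∀ k : Fin K, Function.Bijective (fun c => f c k)) :
    let n : ℝ := (K : ℝ) * ((C : ℝ) * ((C : ℝ) - 1)) / 2
    let WG : ℝ := ∑ u : Fin K × Fin C, ∑ v : Fin K × Fin C, if u.1 ≠ v.1 then w u v else 0
    let W : (Fin C → Fin K → Fin C) → ℝ := fun g =>
      ∑ c : Fin C, ∑ k : Fin K, ∑ k' : Fin K,
        if k ≠ k' then w (k, g c k) (k', g c k') else 0
    let swap : Fin K → Fin C → Fin C → (Fin C → Fin K → Fin C) := fun k c₁ c₂ c k' =>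
      if k' = k then (if c = c₁ then f c₂ k else if c = c₂ then f c₁ k else f c k)
      else f c k'
    (1 / n) * ((1 / 2) * ∑ k : Fin K, ∑ c₁ : Fin C, ∑ c₂ : Fin C,
        if c₁ ≠ c₂ then (W (swap k c₁ c₂) - WG / (C : ℝ)) else 0)
      = (1 - 2 * (C : ℝ) / n) * (W f - WG / (C : ℝ)) := by
  exact NWaux.main K C hK hC w hsymm f hf
end

section
/- The Jaccard distance d(A,B) = 1 − |A ∩ B| / |A ∪ B| (with d(∅,∅) = 0) satisfies the triangle inequality on finite sets, and hence defines a metric on the collection of finite subsets of a given type. -/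
/-!
Writing `d(A, B) = |A ∆ B| / |A ∪ B|`, the triangle inequality follows from the chain
`d(A, C) ≤ (|A ∆ C| + |T|) / (|A ∪ C| + |T|) ≤ (|A ∆ B| + |B ∆ C|) / |A ∪ B ∪ C| ≤ d(A, B) + d(B, C)`,
where `T = B \ (A ∪ C)`: the first step is `x / y ≤ (x + t) / (y + t)` for `0 ≤ x ≤ y`, the
second holds because `A ∆ C` and `T` are disjoint and both lie in `(A ∆ B) ∪ (B ∆ C)`, and the
last enlarges the denominators to `|A ∪ B|` and `|B ∪ C|`.
-/

/-- The Jaccard distance on finite sets: `1 − |A ∩ B| / |A ∪ B|`, with the convention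
`d(∅, ∅) = 0`. -/
noncomputable def jaccardDist {α : Type*} [DecidableEq α] (A B : Finset α) : ℝ :=
  if A ∪ B = ∅ then 0 else 1 - ((A ∩ B).card : ℝ) / ((A ∪ B).card : ℝ)

theorem div_le_add_div_add {K : Type*} [Field K] [LinearOrder K] [IsStrictOrderedRing K]
    {x y t : K} (hx : 0 ≤ x) (hxy : x ≤ y) (ht : 0 ≤ t) :
    x / y ≤ (x + t) / (y + t) := by
  rcases hx.eq_or_lt with rfl | hx
  · simpa using div_nonneg ht (by linarith)
  rw [div_le_div_iff₀ (by linarith) (by linarith)]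
  nlinarith

namespace Finset

variable {α : Type*} [DecidableEq α]

open scoped symmDiff

theorem card_symmDiff_add_card_inter (A B : Finset α) : #(A ∆ B) + #(A ∩ B) = #(A ∪ B) :=
  (card_union_of_disjoint (disjoint_symmDiff_inf A B)).symm.trans
    (congrArg card (symmDiff_sup_inf A B))

theorem card_symmDiff_add_card_sdiff_union_le (A B C : Finset α) :
    #(A ∆ C) + #(B \ (A ∪ C)) ≤ #(A ∆ B) + #(B ∆ C) := by
  have hdisj : Disjoint (A ∆ C) (B \ (A ∪ C)) :=
    disjoint_of_subset_left symmDiff_subset_union disjoint_sdiff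
  rw [← card_union_of_disjoint hdisj]
  refine (card_le_card ?_).trans (card_union_le _ _)
  intro x
  simp only [mem_union, mem_symmDiff, mem_sdiff]
  tauto

end Finset

section JaccardDist

open Finset
open scoped symmDiff

variable {α : Type*} [DecidableEq α]

theorem jaccardDist_eq_card_symmDiff_div (A B : Finset α) :
    jaccardDist A B = #(A ∆ B) / #(A ∪ B) := by
  rw [jaccardDist]
  split_ifs with h
  · simp [union_eq_empty.mp h]
  · have hne : (#(A ∪ B) : ℝ) ≠ 0 := by simpa using h
    have hc : (#(A ∪ B) : ℝ) = #(A ∆ B) + #(A ∩ B) := by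
      exact_mod_cast (card_symmDiff_add_card_inter A B).symm
    rw [eq_div_iff hne, sub_mul, div_mul_cancel₀ _ hne]
    linarith

theorem jaccardDist_nonneg (A B : Finset α) : 0 ≤ jaccardDist A B := by
  rw [jaccardDist_eq_card_symmDiff_div]
  positivity

theorem jaccardDist_comm (A B : Finset α) : jaccardDist A B = jaccardDist B A := by
  rw [jaccardDist_eq_card_symmDiff_div, jaccardDist_eq_card_symmDiff_div, symmDiff_comm,
    union_comm]

theorem jaccardDist_eq_zero_iff {A B : Finset α} : jaccardDist A B = 0 ↔ A = B := by
  rw [jaccardDist_eq_card_symmDiff_div, div_eq_zero_iff, Nat.cast_eq_zero, Nat.cast_eq_zero,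
    card_eq_zero, card_eq_zero, symmDiff_eq_empty, union_eq_empty]
  constructor
  · rintro (h | ⟨rfl, rfl⟩)
    exacts [h, rfl]
  · exact Or.inl

theorem card_symmDiff_div_le_jaccardDist {A B U : Finset α} (h : A ∪ B ⊆ U) :
    (#(A ∆ B) / #U : ℝ) ≤ jaccardDist A B := by
  rw [jaccardDist_eq_card_symmDiff_div]
  rcases (A ∪ B).eq_empty_or_nonempty with hAB | hAB
  · simp [union_eq_empty.mp hAB]
  · exact div_le_div_of_nonneg_left (by positivity) (by simpa using hAB)
      (by exact_mod_cast card_le_card h)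

theorem jaccardDist_triangle (A B C : Finset α) :
    jaccardDist A C ≤ jaccardDist A B + jaccardDist B C := by
  have hU : (#(A ∪ C) + #(B \ (A ∪ C)) : ℝ) = #(B ∪ (A ∪ C)) := by
    rw [add_comm]; exact_mod_cast card_sdiff_add_card B (A ∪ C)
  calc jaccardDist A C = #(A ∆ C) / #(A ∪ C) := jaccardDist_eq_card_symmDiff_div A C
    _ ≤ (#(A ∆ C) + #(B \ (A ∪ C))) / (#(A ∪ C) + #(B \ (A ∪ C))) :=
      div_le_add_div_add (by positivity) (by exact_mod_cast card_le_card symmDiff_subset_union)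
        (by positivity)
    _ ≤ (#(A ∆ B) + #(B ∆ C)) / #(B ∪ (A ∪ C)) := by
      rw [hU]
      exact div_le_div_of_nonneg_right
        (by exact_mod_cast card_symmDiff_add_card_sdiff_union_le A B C) (by positivity)
    _ = #(A ∆ B) / #(B ∪ (A ∪ C)) + #(B ∆ C) / #(B ∪ (A ∪ C)) := add_div _ _ _
    _ ≤ jaccardDist A B + jaccardDist B C := by
      gcongr <;> apply card_symmDiff_div_le_jaccardDist
      · exact (union_subset_union_left subset_union_left).trans_eq (union_comm _ _)
      · exact union_subset_union_right subset_union_right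

end JaccardDist

/-- The Jaccard distance satisfies the triangle inequality on finite sets, and (being
also symmetric, nonnegative, and zero exactly on equal pairs) defines a metric on the
collection of finite subsets of a given type. -/
theorem jaccardDist_is_metric {α : Type*} [DecidableEq α] :
    (∀ A B C : Finset α, jaccardDist A C ≤ jaccardDist A B + jaccardDist B C) ∧
    (∀ A B : Finset α, jaccardDist A B = jaccardDist B A) ∧
    (∀ A B : Finset α, 0 ≤ jaccardDist A B) ∧
    (∀ A B : Finset α, jaccardDist A B = 0 ↔ A = B) :=
  ⟨jaccardDist_triangle, jaccardDist_comm, jaccardDist_nonneg, fun _ _ => jaccardDist_eq_zero_iff⟩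
end

section
/- The greedy first-fit assignment by start time (HEAT) achieves a proper 2-coloring whenever at most 2 intervals overlap at any point: processing intervals in nondecreasing order of start time and assigning each interval to channel 1 if its start time is at least the maximum end time of intervals already on channel 1, and otherwise to channel 2, yields an assignment in which no two intervals on the same channel overlap. -/
open Classical in
/-- The HEAT greedy first-fit channel assignment: interval `n` goes to channel 1
(`true`) iff its start time is at least the end time of every earlier interval already
assigned to channel 1; otherwise it goes to channel 2 (`false`). -/
noncomputable def heat (st en : ℕ → ℝ) (n : ℕ) : Bool :=
  Nat.strongRecOn n (fun n ih =>
    decide (∀ i, ∀ h : i < n, ih i h = true → en i ≤ st n))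

open Classical in
lemma heat_true_iff (st en : ℕ → ℝ) (n : ℕ) :
    heat st en n = true ↔ ∀ i, i < n → heat st en i = true → en i ≤ st n := by
  rw [heat, Nat.strongRecOn_eq]
  simp only [decide_eq_true_eq]
  constructor
  · intro h i hi ht
    exact h i hi ht
  · intro h i hi ht
    exact h i hi ht

lemma heat_false (st en : ℕ → ℝ) (n : ℕ) (h : heat st en n = false) :
    ∃ i, i < n ∧ heat st en i = true ∧ st n < en i := by
  by_contra hc
  push_neg at hc
  have : heat st en n = true := (heat_true_iff st en n).mpr
    (fun i hi ht => hc i hi ht)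
  simp [this] at h

/-- If the intervals `[st n, en n)` are sorted by nondecreasing start time and no point
of the real line lies in 3 or more of the intervals, then the HEAT greedy assignment is
proper: no two intervals on the same channel overlap. -/
theorem heat_proper (N : ℕ) (st en : ℕ → ℝ)
    (hsorted : ∀ m n : ℕ, m ≤ n → n < N → st m ≤ st n)
    (hdepth : ∀ x : ℝ, {n : ℕ | n < N ∧ x ∈ Set.Ico (st n) (en n)}.ncard ≤ 2) :
    ∀ m < N, ∀ n < N, m ≠ n → heat st en m = heat st en n →
      Set.Ico (st m) (en m) ∩ Set.Ico (st n) (en n) = ∅ := by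
  have key : ∀ m n, m < n → n < N → heat st en m = heat st en n →
      Set.Ico (st m) (en m) ∩ Set.Ico (st n) (en n) = ∅ := by
    intro m n hmn hnN heq
    by_contra hne
    obtain ⟨x, hxm, hxn⟩ := Set.nonempty_iff_ne_empty.mpr hne
    obtain ⟨hxm1, hxm2⟩ := hxm
    obtain ⟨hxn1, hxn2⟩ := hxn
    cases hb : heat st en n with
    | true =>
      have hm : heat st en m = true := heq.trans hb
      have := (heat_true_iff st en n).mp hb m hmn hm
      linarith
    | false =>
      have hm : heat st en m = false := heq.trans hb
      obtain ⟨j, hjn, hjt, hje⟩ := heat_false st en n hb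
      have hjm : j ≠ m := fun h => by rw [h, hm] at hjt; exact Bool.noConfusion hjt
      have hjN : j < N := hjn.trans hnN
      have hjn' : j ≠ n := hjn.ne
      have hmn' : m ≠ n := hmn.ne
      set p := st n with hp
      have hpm : m ∈ {k : ℕ | k < N ∧ p ∈ Set.Ico (st k) (en k)} := by
        refine ⟨hmn.trans hnN, hsorted m n hmn.le hnN, ?_⟩
        linarith
      have hpn : n ∈ {k : ℕ | k < N ∧ p ∈ Set.Ico (st k) (en k)} := by
        refine ⟨hnN, le_refl _, ?_⟩
        linarith
      have hpj : j ∈ {k : ℕ | k < N ∧ p ∈ Set.Ico (st k) (en k)} := by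
        exact ⟨hjN, hsorted j n hjn.le hnN, hje⟩
    -- now {j, m, n} ⊆ S, with three distinct elements
      have hsub : ({j, m, n} : Set ℕ) ⊆ {k : ℕ | k < N ∧ p ∈ Set.Ico (st k) (en k)} := by
        intro k hk
        rcases hk with h | h | h <;> subst h <;> assumption
      have hfin : {k : ℕ | k < N ∧ p ∈ Set.Ico (st k) (en k)}.Finite :=
        Set.Finite.subset (Set.finite_Iio N) (fun k hk => hk.1)
      have h3 : ({j, m, n} : Set ℕ).ncard = 3 := by
        rw [Set.ncard_insert_of_notMem (by simp [hjm, hjn']),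
            Set.ncard_pair hmn']
      have := Set.ncard_le_ncard hsub hfin
      rw [h3] at this
      have := hdepth p
      omega
  intro m hm n hn hmn heq
  rcases lt_trichotomy m n with h | h | h
  · exact key m n h hn heq
  · exact absurd h hmn
  · rw [Set.inter_comm]
    exact key n m h hm heq.symm
end
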